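/- Let S₁ and S₂ be Steiner bundles of type (E, F) on a smooth projective variety X, i.e., there are short exact sequences 0 → E^{a_i} → F^{b_i} → S_i → 0 for i = 1,2, where (E, F) is a strongly exceptional pair of vector bundles. Then Ext^p(S₁, S₂) = 0 for all p ≥ 2. -/

import Mathlib

/-!
Both long exact `Ext` sequences of `0 → E^a → F^b → S → 0` are used. In the second variable,
`Ext^q(E, -)` and `Ext^q(F, -)` vanish on `E` and on `F` for `q ≥ 1`, hence on `S₂`. In the first
variable, `Ext^p(S₁, S₂)` then sits between `Ext^{p-1}(E^{a₁}, S₂)` and `Ext^p(F^{b₁}, S₂)`, which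
both vanish once `p ≥ 2`.
-/

open CategoryTheory Limits

namespace CategoryTheory.Abelian.Ext

variable {C : Type*} [Category C] [Abelian C] [HasExt C]

lemma subsingleton_biproduct_left {ι : Type*} [Fintype ι] (f : ι → C) [HasBiproduct f]
    (Y : C) (n : ℕ) (h : ∀ i, Subsingleton (Ext (f i) Y n)) :
    Subsingleton (Ext (⨁ f) Y n) :=
  (biproductAddEquiv (biproduct.isBilimit f) Y n).toEquiv.subsingleton

lemma subsingleton_biproduct_right {ι : Type*} [Fintype ι] (X : C) (f : ι → C) [HasBiproduct f]
    (n : ℕ) (h : ∀ i, Subsingleton (Ext X (f i) n)) :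
    Subsingleton (Ext X (⨁ f) n) :=
  (addEquivBiproduct X (biproduct.isBilimit f) n).toEquiv.subsingleton

variable {S : ShortComplex C} (hS : S.ShortExact)
include hS

lemma subsingleton_of_shortExact_covariant {X : C} {n : ℕ}
    (h₂ : Subsingleton (Ext X S.X₂ n)) (h₁ : Subsingleton (Ext X S.X₁ (n + 1))) :
    Subsingleton (Ext X S.X₃ n) := by
  refine subsingleton_of_forall_eq 0 fun x => ?_
  obtain ⟨x₂, rfl⟩ := covariant_sequence_exact₃ X hS x rfl (Subsingleton.elim _ _)
  rw [Subsingleton.elim x₂ 0, zero_comp]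

lemma subsingleton_of_shortExact_contravariant {Y : C} {n : ℕ}
    (h₂ : Subsingleton (Ext S.X₂ Y (n + 1))) (h₁ : Subsingleton (Ext S.X₁ Y n)) :
    Subsingleton (Ext S.X₃ Y (n + 1)) := by
  refine subsingleton_of_forall_eq 0 fun x => ?_
  obtain ⟨x₁, rfl⟩ := contravariant_sequence_exact₃ hS Y x (Subsingleton.elim _ _) (add_comm 1 n)
  rw [Subsingleton.elim x₁ 0, comp_zero]

end CategoryTheory.Abelian.Ext

theorem steiner_ext_vanishing_general
    {𝒞 : Type u} [Category.{v} 𝒞] [Abelian 𝒞]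
    [HasFiniteBiproducts 𝒞] [HasExt.{w} 𝒞]
    (E F : 𝒞)
    (hEE : ∀ p : ℕ, 1 ≤ p → Subsingleton (Abelian.Ext E E p))
    (hFF : ∀ p : ℕ, 1 ≤ p → Subsingleton (Abelian.Ext F F p))
    (hFE : ∀ p : ℕ, 1 ≤ p → Subsingleton (Abelian.Ext F E p))
    (hEF : ∀ p : ℕ, 1 ≤ p → Subsingleton (Abelian.Ext E F p))
    (a₁ b₁ a₂ b₂ : ℕ)
    (S₁ S₂ : 𝒞)
    (α₁ : (⨁ fun _ : Fin a₁ => E) ⟶ (⨁ fun _ : Fin b₁ => F))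
    (π₁ : (⨁ fun _ : Fin b₁ => F) ⟶ S₁)
    (w₁ : α₁ ≫ π₁ = 0) [Mono α₁] [Epi π₁]
    (hex₁ : (ShortComplex.mk α₁ π₁ w₁).Exact)
    (α₂ : (⨁ fun _ : Fin a₂ => E) ⟶ (⨁ fun _ : Fin b₂ => F))
    (π₂ : (⨁ fun _ : Fin b₂ => F) ⟶ S₂)
    (w₂ : α₂ ≫ π₂ = 0) [Mono α₂] [Epi π₂]
    (hex₂ : (ShortComplex.mk α₂ π₂ w₂).Exact) :
    ∀ p : ℕ, 2 ≤ p → Subsingleton (Abelian.Ext S₁ S₂ p) := by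
  have hS₂ : ∀ X : 𝒞, (∀ q, 1 ≤ q → Subsingleton (Abelian.Ext X E q)) →
      (∀ q, 1 ≤ q → Subsingleton (Abelian.Ext X F q)) →
      ∀ q, 1 ≤ q → Subsingleton (Abelian.Ext X S₂ q) := fun X hXE hXF q hq =>
    Abelian.Ext.subsingleton_of_shortExact_covariant ⟨hex₂⟩
      (Abelian.Ext.subsingleton_biproduct_right X _ q fun _ => hXF q hq)
      (Abelian.Ext.subsingleton_biproduct_right X _ (q + 1) fun _ => hXE (q + 1) (by omega))
  have hES₂ := hS₂ E hEE hEF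
  have hFS₂ := hS₂ F hFE hFF
  intro p hp
  obtain ⟨n, rfl⟩ : ∃ n, p = n + 1 := ⟨p - 1, by omega⟩
  exact Abelian.Ext.subsingleton_of_shortExact_contravariant ⟨hex₁⟩
    (Abelian.Ext.subsingleton_biproduct_left _ S₂ (n + 1) fun _ => hFS₂ (n + 1) (by omega))
    (Abelian.Ext.subsingleton_biproduct_left _ S₂ n fun _ => hES₂ n (by omega))

/-- Let `(E, F)` be a strongly exceptional pair of vector bundles on a smooth projective
variety (both simple, `Ext^p(E,E) = Ext^p(F,F) = 0` for `p ≥ 1`, `Ext^p(F,E) = 0` for all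
`p ≥ 0`, and `Ext^p(E,F) = 0` for `p ≠ 0`), and let `S₁`, `S₂` be Steiner bundles of type
`(E, F)`, given by short exact sequences `0 → E^{aᵢ} → F^{bᵢ} → Sᵢ → 0` for `i = 1, 2`.
Then `Ext^p(S₁, S₂) = 0` for all `p ≥ 2`. -/
theorem steiner_ext_vanishing
    {κ : Type*} [Field κ]
    {𝒞 : Type u} [Category.{v} 𝒞] [Abelian 𝒞] [Linear κ 𝒞]
    [HasFiniteBiproducts 𝒞] [HasExt.{w} 𝒞]
    (E F : 𝒞)
    (hEsimple : ∀ f : E ⟶ E, ∃ c : κ, f = c • 𝟙 E)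
    (hFsimple : ∀ f : F ⟶ F, ∃ c : κ, f = c • 𝟙 F)
    (hEE : ∀ p : ℕ, 1 ≤ p → Subsingleton (Abelian.Ext E E p))
    (hFF : ∀ p : ℕ, 1 ≤ p → Subsingleton (Abelian.Ext F F p))
    (hFE0 : ∀ f : F ⟶ E, f = 0)
    (hFE : ∀ p : ℕ, 1 ≤ p → Subsingleton (Abelian.Ext F E p))
    (hEF : ∀ p : ℕ, 1 ≤ p → Subsingleton (Abelian.Ext E F p))
    (a₁ b₁ a₂ b₂ : ℕ) (ha₁ : 1 ≤ a₁) (hb₁ : 1 ≤ b₁) (ha₂ : 1 ≤ a₂) (hb₂ : 1 ≤ b₂)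
    (S₁ S₂ : 𝒞)
    (α₁ : (⨁ fun _ : Fin a₁ => E) ⟶ (⨁ fun _ : Fin b₁ => F))
    (π₁ : (⨁ fun _ : Fin b₁ => F) ⟶ S₁)
    (w₁ : α₁ ≫ π₁ = 0) [Mono α₁] [Epi π₁]
    (hex₁ : (ShortComplex.mk α₁ π₁ w₁).Exact)
    (α₂ : (⨁ fun _ : Fin a₂ => E) ⟶ (⨁ fun _ : Fin b₂ => F))
    (π₂ : (⨁ fun _ : Fin b₂ => F) ⟶ S₂)
    (w₂ : α₂ ≫ π₂ = 0) [Mono α₂] [Epi π₂]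
    (hex₂ : (ShortComplex.mk α₂ π₂ w₂).Exact) :
    ∀ p : ℕ, 2 ≤ p → Subsingleton (Abelian.Ext S₁ S₂ p) :=
  steiner_ext_vanishing_general E F hEE hFF hFE hEF a₁ b₁ a₂ b₂ S₁ S₂ α₁ π₁ w₁ hex₁ α₂ π₂ w₂ hex₂
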